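/- arXiv:2303.18158 — 3 statements merged into one kernel-verified Lean document; each statement's English description precedes it below -/
import Mathlib

section
/- Let T = {(τ, x, z) ∈ ℝ × ℝ^d × Z : h(aᵀx) ≤ τ and x_i(1 − z_i) = 0 for all i ∈ [d]}, where Z ⊆ {0,1}^d with Z ≠ {0}, the graph G_Z is connected, a ∈ ℝ^d has a_i ≠ 0 for all i, and h : ℝ → ℝ ∪ {+∞} is proper, lower semicontinuous, convex with h(0) = 0. Define T̄ = {(τ, x, z, s, w) ∈ ℝ × ℝ^d × ℝ^d × ℝ × ℝ : h(s) ≤ τ, aᵀx = s, s(1 − w) = 0, (w, z) ∈ Δ₁}, where Δ₁ = {(w, z) ∈ {0,1} × Z : w ≤ Σ_{i∈[d]} z_i}. Then the closed convex hull of T equals the closed convex hull of the projection {(τ, x, z) : there exist s, w with (τ, x, z, s, w) ∈ T̄}. -/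
open scoped Classical

/-- The graph `G_Z` on `[d]` associated with `Z ⊆ {0,1}^d`. -/
def graphOfZ {d : ℕ} (Z : Set (Fin d → ℝ)) : SimpleGraph (Fin d) :=
  SimpleGraph.fromRel (fun i j => ∃ z ∈ Z, z i = 1 ∧ z j = 1)

/-!
Clearly `T ⊆ proj T̄`. Conversely, a point `(τ, x, z)` of `proj T̄` differs from a point
`(τ, x₀, z)` of `T` (with `x₀ = 0`, or `x₀` supported on one `i` with `z_i = 1`) by a direction
`(0, v, 0)` with `aᵀv = 0`. Such directions lie in the lineality space of `cl conv T`: for an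
edge `{i, j}` of `G_Z`, witnessed by `z ∈ Z`, the whole line `(0, t (a_j e_i - a_i e_j), z)` lies
in `T` because `h(0) = 0`, and since `G_Z` is connected and all `a_i ≠ 0`, the vectors
`a_j e_i - a_i e_j` of its edges span the hyperplane `aᵀv = 0`.
-/

open Filter Topology

section Lineality

variable {E : Type*} [AddCommGroup E] [Module ℝ E]

def linealitySpace (C : Set E) : Submodule ℝ E where
  carrier := {u | ∀ c : ℝ, ∀ p ∈ C, p + c • u ∈ C}
  zero_mem' := by simp
  add_mem' {u v} hu hv c p hp := by
    simpa only [smul_add, add_assoc] using hv c _ (hu c p hp)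
  smul_mem' r u hu c p hp := by
    simpa only [smul_smul] using hu (c * r) p hp

variable [TopologicalSpace E] [ContinuousSMul ℝ E]

theorem Convex.add_mem_of_forall_add_smul_mem [ContinuousAdd E] {C : Set E} (hC : Convex ℝ C)
    (hcl : IsClosed C) {p q u : E} (hp : p ∈ C) (hq : ∀ t : ℝ, 0 ≤ t → q + t • u ∈ C) :
    p + u ∈ C := by
  have hlim : Tendsto (fun ε : ℝ => (1 - ε) • p + ε • q + u) (𝓝[>] 0) (𝓝 (p + u)) := by
    have hcont : Continuous (fun ε : ℝ => (1 - ε) • p + ε • q + u) := by fun_prop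
    simpa only [sub_zero, one_smul, zero_smul, add_zero] using
      (hcont.tendsto 0).mono_left nhdsWithin_le_nhds
  refine hcl.mem_of_tendsto hlim ?_
  filter_upwards [Ioo_mem_nhdsGT one_pos] with ε ⟨hε0, hε1⟩
  have hcomb : (1 - ε) • p + ε • q + u = (1 - ε) • p + ε • (q + ε⁻¹ • u) := by
    rw [smul_add, smul_smul, mul_inv_cancel₀ hε0.ne', one_smul, add_assoc]
  rw [hcomb]
  exact hC hp (hq _ (inv_nonneg.2 hε0.le)) (by linarith) hε0.le (by ring)

theorem mem_linealitySpace_closure_convexHull [IsTopologicalAddGroup E] {S : Set E} {q u : E}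
    (hq : ∀ t : ℝ, q + t • u ∈ S) : u ∈ linealitySpace (closure (convexHull ℝ S)) := by
  intro c p hp
  refine (convex_convexHull ℝ S).closure.add_mem_of_forall_add_smul_mem isClosed_closure hp
    (q := q) fun t _ => subset_closure (subset_convexHull ℝ S ?_)
  simpa only [smul_smul] using hq (t * c)

end Lineality

section EdgeDirections

variable {ι : Type*} [DecidableEq ι] (a : ι → ℝ)

def edgeDir (i j : ι) : ι → ℝ :=
  Pi.single i (a j) - Pi.single j (a i)

theorem dotProduct_edgeDir [Fintype ι] (i j : ι) : a ⬝ᵥ edgeDir a i j = 0 := by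
  simp [edgeDir, dotProduct_sub, dotProduct_single, mul_comm]

theorem edgeDir_self (i : ι) : edgeDir a i i = 0 := by
  simp [edgeDir]

theorem edgeDir_eq_add {k : ι} (hk : a k ≠ 0) (i j : ι) :
    edgeDir a i j = (a j / a k) • edgeDir a i k + (a i / a k) • edgeDir a k j := by
  ext m
  simp only [edgeDir, Pi.add_apply, Pi.smul_apply, Pi.sub_apply, Pi.single_apply, smul_eq_mul]
  split_ifs <;> field_simp <;> ring

theorem eq_sum_smul_edgeDir [Fintype ι] {i₀ : ι} (hi₀ : a i₀ ≠ 0) {v : ι → ℝ} (hv : a ⬝ᵥ v = 0) :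
    v = ∑ i, (v i / a i₀) • edgeDir a i i₀ := by
  have hv' : ∑ i, v i * a i = 0 := by simpa [dotProduct, mul_comm] using hv
  ext m
  simp only [edgeDir, Finset.sum_apply, Pi.smul_apply, Pi.sub_apply, Pi.single_apply,
    smul_eq_mul, mul_sub, Finset.sum_sub_distrib, mul_ite, mul_zero, Finset.sum_ite_eq,
    Finset.mem_univ, if_true]
  by_cases hm : m = i₀
  · subst hm
    field_simp
    simp only [if_true, ← Finset.sum_div, hv', zero_div, sub_zero]
  · simp [hm, hi₀]

variable {G : SimpleGraph ι} {M : Submodule ℝ (ι → ℝ)}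

theorem edgeDir_mem_of_reachable (ha : ∀ i, a i ≠ 0)
    (hM : ∀ i j, G.Adj i j → edgeDir a i j ∈ M) {i j : ι} (hij : G.Reachable i j) :
    edgeDir a i j ∈ M := by
  obtain ⟨w⟩ := hij
  induction w with
  | nil => simp [edgeDir_self]
  | @cons i k j hik _ ih =>
    rw [edgeDir_eq_add a (ha k)]
    exact M.add_mem (M.smul_mem _ (hM i k hik)) (M.smul_mem _ ih)

theorem mem_of_dotProduct_eq_zero [Fintype ι] (hG : G.Connected) (ha : ∀ i, a i ≠ 0)
    (hM : ∀ i j, G.Adj i j → edgeDir a i j ∈ M) {v : ι → ℝ} (hv : a ⬝ᵥ v = 0) : v ∈ M := by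
  obtain ⟨i₀⟩ := hG.nonempty
  rw [eq_sum_smul_edgeDir a (ha i₀) hv]
  exact M.sum_mem fun i _ =>
    M.smul_mem _ (edgeDir_mem_of_reachable a ha hM (hG.preconnected i i₀))

end EdgeDirections

theorem exists_eq_one_iff_one_le_sum {ι : Type*} [Fintype ι] {z : ι → ℝ}
    (hz : ∀ i, z i = 0 ∨ z i = 1) : (∃ i, z i = 1) ↔ 1 ≤ ∑ i, z i := by
  have hnonneg : ∀ i ∈ Finset.univ, 0 ≤ z i := fun i _ => by
    rcases hz i with hi | hi <;> simp [hi]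
  constructor
  · rintro ⟨i, hi⟩
    exact hi ▸ Finset.single_le_sum hnonneg (Finset.mem_univ i)
  · intro hsum
    by_contra! hne
    have hzero : ∑ i, z i = 0 := Finset.sum_eq_zero fun i _ => (hz i).resolve_right (hne i)
    linarith

section ComplementaritySets

variable {d : ℕ} (Z : Set (Fin d → ℝ)) (a : Fin d → ℝ) (h : ℝ → EReal)

/-- The set `T`, with points `(τ, x, z)`. -/
def complementaritySet : Set (ℝ × (Fin d → ℝ) × (Fin d → ℝ)) :=
  {p | p.2.2 ∈ Z ∧ h (∑ i, a i * p.2.1 i) ≤ (p.1 : EReal) ∧ ∀ i, p.2.1 i * (1 - p.2.2 i) = 0}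

/-- The projection of `T̄` onto the coordinates `(τ, x, z)`. -/
def liftedSetProj : Set (ℝ × (Fin d → ℝ) × (Fin d → ℝ)) :=
  {p | ∃ s w : ℝ, h s ≤ (p.1 : EReal) ∧ (∑ i, a i * p.2.1 i) = s ∧ s * (1 - w) = 0 ∧
    (w = 0 ∨ w = 1) ∧ p.2.2 ∈ Z ∧ w ≤ ∑ i, p.2.2 i}

variable {Z}

theorem complementaritySet_subset_liftedSetProj (hZ01 : ∀ z ∈ Z, ∀ i, z i = 0 ∨ z i = 1) :
    complementaritySet Z a h ⊆ liftedSetProj Z a h := by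
  rintro ⟨τ, x, z⟩ ⟨hz, hτ, hxz⟩
  by_cases hsupp : ∃ i, z i = 1
  · refine ⟨_, 1, hτ, rfl, by ring, Or.inr rfl, hz, ?_⟩
    exact (exists_eq_one_iff_one_le_sum (hZ01 z hz)).1 hsupp
  · push Not at hsupp
    have hx : x = 0 := funext fun i => by
      simpa [(hZ01 z hz i).resolve_right (hsupp i)] using hxz i
    subst hx
    refine ⟨0, 0, by simpa using hτ, by simp, by ring, Or.inl rfl, hz, ?_⟩
    exact Finset.sum_nonneg fun i _ => by rcases hZ01 z hz i with hi | hi <;> simp [hi]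

theorem exists_mem_complementaritySet_of_mem_liftedSetProj
    (hZ01 : ∀ z ∈ Z, ∀ i, z i = 0 ∨ z i = 1) (ha : ∀ i, a i ≠ 0)
    {p : ℝ × (Fin d → ℝ) × (Fin d → ℝ)} (hp : p ∈ liftedSetProj Z a h) :
    ∃ x₀, (p.1, x₀, p.2.2) ∈ complementaritySet Z a h ∧ a ⬝ᵥ (p.2.1 - x₀) = 0 := by
  obtain ⟨s, w, hτ, hs, hsw, hw | hw, hz, hwz⟩ := hp
  · obtain rfl : s = 0 := by simpa [hw] using hsw
    exact ⟨0, ⟨hz, by simpa using hτ, by simp⟩, by simpa [dotProduct] using hs⟩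
  · obtain ⟨i, hi⟩ := (exists_eq_one_iff_one_le_sum (hZ01 _ hz)).2 (hw ▸ hwz)
    have hx₀ : a ⬝ᵥ Pi.single i (s / a i) = s := by
      rw [dotProduct_single, mul_div_cancel₀ _ (ha i)]
    refine ⟨Pi.single i (s / a i), ⟨hz, ?_, fun k => ?_⟩, ?_⟩
    · exact (congrArg h hx₀).trans_le hτ
    · by_cases hk : k = i
      · subst hk; simp [hi]
      · simp [hk]
    · rw [dotProduct_sub, hx₀]
      exact sub_eq_zero.2 hs

theorem edgeDir_mem_linealitySpace (h0 : h 0 = 0) {z : Fin d → ℝ} (hz : z ∈ Z) {i j : Fin d}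
    (hi : z i = 1) (hj : z j = 1) :
    ((0 : ℝ), edgeDir a i j, (0 : Fin d → ℝ)) ∈
      linealitySpace (closure (convexHull ℝ (complementaritySet Z a h))) := by
  refine mem_linealitySpace_closure_convexHull (q := (0, 0, z)) fun t => ?_
  rw [show ((0 : ℝ), (0 : Fin d → ℝ), z) + t • ((0 : ℝ), edgeDir a i j, (0 : Fin d → ℝ)) =
    (0, t • edgeDir a i j, z) by simp]
  refine ⟨hz, ?_, ?_⟩
  · change h (a ⬝ᵥ (t • edgeDir a i j)) ≤ ((0 : ℝ) : EReal)
    rw [dotProduct_smul, dotProduct_edgeDir, smul_zero, h0, EReal.coe_zero]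
  · intro k
    by_cases hki : k = i
    · subst hki; simp [hi]
    by_cases hkj : k = j
    · subst hkj; simp [hj]
    simp [edgeDir, hki, hkj]

end ComplementaritySets

theorem clconv_T_eq_clconv_proj_Tbar_general {d : ℕ}
    (Z : Set (Fin d → ℝ)) (hZ01 : ∀ z ∈ Z, ∀ i, z i = 0 ∨ z i = 1)
    (hconn : (graphOfZ Z).Connected)
    (a : Fin d → ℝ) (ha : ∀ i, a i ≠ 0)
    (h : ℝ → EReal)
    (h0 : h 0 = 0) :
    closure (convexHull ℝ
      {p : ℝ × (Fin d → ℝ) × (Fin d → ℝ) |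
        p.2.2 ∈ Z ∧ h (∑ i, a i * p.2.1 i) ≤ (p.1 : EReal) ∧
        ∀ i, p.2.1 i * (1 - p.2.2 i) = 0})
      = closure (convexHull ℝ
        {p : ℝ × (Fin d → ℝ) × (Fin d → ℝ) | ∃ s w : ℝ,
          h s ≤ (p.1 : EReal) ∧ (∑ i, a i * p.2.1 i) = s ∧ s * (1 - w) = 0 ∧
          (w = 0 ∨ w = 1) ∧ p.2.2 ∈ Z ∧ w ≤ ∑ i, p.2.2 i}) := by
  change closure (convexHull ℝ (complementaritySet Z a h)) =
    closure (convexHull ℝ (liftedSetProj Z a h))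
  set C := closure (convexHull ℝ (complementaritySet Z a h))
  let embed : (Fin d → ℝ) →ₗ[ℝ] ℝ × (Fin d → ℝ) × (Fin d → ℝ) :=
    LinearMap.inr ℝ ℝ _ ∘ₗ LinearMap.inl ℝ _ _
  have hedge : ∀ i j, (graphOfZ Z).Adj i j → edgeDir a i j ∈ (linealitySpace C).comap embed := by
    intro i j hij
    obtain ⟨z, hz, hi, hj⟩ | ⟨z, hz, hj, hi⟩ := ((SimpleGraph.fromRel_adj _ i j).1 hij).2 <;>
      exact edgeDir_mem_linealitySpace a h h0 hz hi hj
  have hproj : liftedSetProj Z a h ⊆ C := by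
    intro p hp
    obtain ⟨x₀, hx₀, hv⟩ := exists_mem_complementaritySet_of_mem_liftedSetProj a h hZ01 ha hp
    have hmem := mem_of_dotProduct_eq_zero a hconn ha hedge hv 1 _
      (subset_closure (subset_convexHull ℝ _ hx₀))
    simpa [embed] using hmem
  exact (closure_mono (convexHull_mono (complementaritySet_subset_liftedSetProj a h hZ01))).antisymm
    (closure_minimal (convexHull_min hproj (convex_convexHull ℝ _).closure) isClosed_closure)

/-- `cl conv(T)` equals the closed convex hull of the projection of the lifted set `T̄`,
in which all individual complementarity constraints are replaced by a single one,
`s(1 - w) = 0` with `(w, z) ∈ Δ₁ = {(w, z) ∈ {0,1} × Z : w ≤ 1ᵀz}`. -/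
theorem clconv_T_eq_clconv_proj_Tbar {d : ℕ}
    (Z : Set (Fin d → ℝ)) (hZ01 : ∀ z ∈ Z, ∀ i, z i = 0 ∨ z i = 1)
    (hZne : Z ≠ {0}) (hconn : (graphOfZ Z).Connected)
    (a : Fin d → ℝ) (ha : ∀ i, a i ≠ 0)
    (h : ℝ → EReal)
    (hbot : ∀ x : ℝ, h x ≠ ⊥) (hnetop : ∃ x : ℝ, h x ≠ ⊤)
    (hlsc : LowerSemicontinuous h)
    (hconv : Convex ℝ {u : ℝ × ℝ | h u.2 ≤ (u.1 : EReal)})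
    (h0 : h 0 = 0) :
    closure (convexHull ℝ
      {p : ℝ × (Fin d → ℝ) × (Fin d → ℝ) |
        p.2.2 ∈ Z ∧ h (∑ i, a i * p.2.1 i) ≤ (p.1 : EReal) ∧
        ∀ i, p.2.1 i * (1 - p.2.2 i) = 0})
      = closure (convexHull ℝ
        {p : ℝ × (Fin d → ℝ) × (Fin d → ℝ) | ∃ s w : ℝ,
          h s ≤ (p.1 : EReal) ∧ (∑ i, a i * p.2.1 i) = s ∧ s * (1 - w) = 0 ∧
          (w = 0 ∨ w = 1) ∧ p.2.2 ∈ Z ∧ w ≤ ∑ i, p.2.2 i}) :=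
  clconv_T_eq_clconv_proj_Tbar_general Z hZ01 hconn a ha h h0
end

section
/- Let X = {x ∈ ℝ^d : x_i ≥ 0 for all i ∈ I} for some I ⊆ [d], let Z ⊆ {0,1}^d be such that for every pair i, j ∈ [d] there exists z ∈ Z with z_i = z_j = 1, let a ∈ ℝ^d have a_i ≠ 0 for all i, and let h : ℝ → ℝ ∪ {+∞} be nonlinear, proper, lower semicontinuous, convex with h(0) = 0. Let T = {(τ, x, z) ∈ ℝ × X × Z : h(aᵀx) ≤ τ and x_i(1 − z_i) = 0 for all i ∈ [d]}. Then for every (τ, x, z) in the closed convex hull of T and every x̄ ∈ X with aᵀx̄ = 0, the point (τ, x + x̄, z) also lies in the closed convex hull of T. -/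
/-!
The transport plan between the positive and negative entries of `u = a ∘ x̄` (which sum to zero)
writes `x̄` as a nonnegative combination of the vectors `eᵢ / aᵢ - eⱼ / aⱼ` with `uᵢ > 0 > uⱼ`;
the sign constraints of `X` force such a vector, scaled by `λ ≥ 0`, to lie in `X` again. Picking
`z ∈ Z` with `zᵢ = zⱼ = 1`, every point `(0, λ (eᵢ / aᵢ - eⱼ / aⱼ), z)` lies in `T` since `h 0 = 0`,
so the direction `(0, eᵢ / aᵢ - eⱼ / aⱼ, 0)` of this ray is a recession direction of `cl conv T`;
recession directions add up.
-/

open Finset Filter Topology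

section Recession

variable {E : Type*} [AddCommGroup E] [Module ℝ E] [TopologicalSpace E]

def recessionCone (K : Set E) : AddSubmonoid E where
  carrier := {v | ∀ p ∈ K, p + v ∈ K}
  zero_mem' p hp := by rwa [add_zero]
  add_mem' hv hw p hp := by rw [← add_assoc]; exact hw _ (hv p hp)

variable [IsTopologicalAddGroup E] [ContinuousSMul ℝ E]

theorem mem_recessionCone_closure_convexHull_of_forall_add_mem {s : Set E} {v : E}
    (hv : ∀ q ∈ s, q + v ∈ closure (convexHull ℝ s)) :
    v ∈ recessionCone (closure (convexHull ℝ s)) := fun _ hp =>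
  closure_minimal (convexHull_min hv ((convex_convexHull ℝ s).closure.translate_preimage_left v))
    (isClosed_closure.preimage (continuous_add_const v)) hp

/-- `q + v` is the limit of the convex combinations `(1 - t) • q + t • (y + t⁻¹ • v)` as `t → 0⁺`. -/
theorem add_mem_closure_convexHull_of_ray {s : Set E} {q y v : E} (hq : q ∈ s)
    (hray : ∀ t : ℝ, 0 < t → y + t • v ∈ s) : q + v ∈ closure (convexHull ℝ s) := by
  set f : ℝ → E := fun t => (1 - t) • q + t • y + v
  have hf : Tendsto f (𝓝[>] 0) (𝓝 (q + v)) := by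
    have : Continuous f := by fun_prop
    simpa [f] using (this.tendsto 0).mono_left nhdsWithin_le_nhds
  refine mem_closure_of_tendsto hf ?_
  filter_upwards [Ioo_mem_nhdsGT (zero_lt_one' ℝ)] with t ⟨ht0, ht1⟩
  have hcombo : (1 - t) • q + t • (y + t⁻¹ • v) = f t := by
    rw [smul_add, smul_smul, mul_inv_cancel₀ ht0.ne', one_smul, ← add_assoc]
  rw [← hcombo]
  exact convex_convexHull ℝ s (subset_convexHull ℝ s hq)
    (subset_convexHull ℝ s (hray t⁻¹ (inv_pos.2 ht0))) (by linarith) ht0.le (by ring)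

theorem mem_recessionCone_closure_convexHull_of_ray {s : Set E} {y v : E}
    (hray : ∀ t : ℝ, 0 < t → y + t • v ∈ s) :
    v ∈ recessionCone (closure (convexHull ℝ s)) :=
  mem_recessionCone_closure_convexHull_of_forall_add_mem fun _ hq =>
    add_mem_closure_convexHull_of_ray hq hray

end Recession

/-- Transport plan `cᵢⱼ = uᵢ⁺ uⱼ⁻ / ∑ₖ uₖ⁺` from the positive to the negative entries of `u`. -/
theorem exists_sum_smul_single_sub_single_eq {ι : Type*} [Fintype ι] [DecidableEq ι]
    (u : ι → ℝ) (hu : ∑ k, u k = 0) :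
    ∃ c : ι → ι → ℝ, (∀ i j, 0 ≤ c i j) ∧ (∀ i j, c i j ≠ 0 → 0 < u i ∧ u j < 0) ∧
      ∑ i, ∑ j, c i j • (Pi.single i 1 - Pi.single j 1 : ι → ℝ) = u := by
  set S := ∑ k, (u k)⁺
  have hS : ∑ k, (u k)⁻ = S := by
    have : ∑ k, ((u k)⁺ - (u k)⁻) = 0 := by simpa only [posPart_sub_negPart] using hu
    rw [sum_sub_distrib] at this
    linarith
  refine ⟨fun i j => (u i)⁺ * (u j)⁻ / S, fun i j => by positivity, fun i j hc => ?_, ?_⟩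
  · simp only [ne_eq, div_eq_zero_iff, mul_eq_zero, not_or] at hc
    exact ⟨posPart_pos_iff.1 ((posPart_nonneg _).lt_of_ne' hc.1.1),
      negPart_pos_iff.1 ((negPart_nonneg _).lt_of_ne' hc.1.2)⟩
  · ext k
    simp only [Finset.sum_apply, Pi.smul_apply, Pi.sub_apply, Pi.single_apply, smul_eq_mul,
      mul_sub, mul_ite, mul_one, mul_zero, sum_sub_distrib]
    conv_lhs => arg 2; rw [sum_comm]
    simp only [← ite_sum_zero, sum_ite_eq, mem_univ, if_true, ← sum_div, ← mul_sum, ← sum_mul, hS]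
    rcases eq_or_ne S 0 with hS0 | hS0
    · have hpos : (u k)⁺ = 0 := (sum_eq_zero_iff_of_nonneg fun i _ => posPart_nonneg (u i)).1
        hS0 k (mem_univ k)
      have hneg : (u k)⁻ = 0 := (sum_eq_zero_iff_of_nonneg fun i _ => negPart_nonneg (u i)).1
        (hS.trans hS0) k (mem_univ k)
      rw [← posPart_sub_negPart (u k), hpos, hneg]
      simp
    · rw [mul_div_cancel_right₀ _ hS0, mul_div_cancel_left₀ _ hS0, posPart_sub_negPart]

section PairDir

variable {ι : Type*} [DecidableEq ι] (a : ι → ℝ) (i j : ι)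

noncomputable def pairDir : ι → ℝ := a⁻¹ * (Pi.single i 1 - Pi.single j 1)

variable {a}

theorem sum_mul_pairDir [Fintype ι] (ha : ∀ k, a k ≠ 0) : ∑ k, a k * pairDir a i j k = 0 := by
  simp [pairDir, mul_inv_cancel_left₀ (ha _), sum_sub_distrib]

theorem pairDir_apply_of_ne {k : ι} (hi : k ≠ i) (hj : k ≠ j) : pairDir a i j k = 0 := by
  simp [pairDir, hi, hj]

theorem pairDir_nonneg {x : ι → ℝ} (hi : 0 < a i * x i) (hj : a j * x j < 0) {k : ι}
    (hk : 0 ≤ x k) : 0 ≤ pairDir a i j k := by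
  have hij : i ≠ j := by rintro rfl; linarith
  by_cases hki : k = i
  · subst hki
    have : 0 < a k := pos_of_mul_pos_left hi hk
    simp [pairDir, hij, this.le]
  by_cases hkj : k = j
  · subst hkj
    have : a k < 0 := neg_of_mul_neg_left hj hk
    simp [pairDir, hki, this.le]
  · rw [pairDir_apply_of_ne i j hki hkj]

theorem sum_sum_smul_pairDir [Fintype ι] (ha : ∀ k, a k ≠ 0) {c : ι → ι → ℝ} {x : ι → ℝ}
    (hc : ∑ i, ∑ j, c i j • (Pi.single i 1 - Pi.single j 1 : ι → ℝ) = fun k => a k * x k) :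
    ∑ i, ∑ j, c i j • pairDir a i j = x := by
  simp_rw [pairDir, ← mul_smul_comm, ← mul_sum, hc]
  ext k
  simp [inv_mul_cancel_left₀ (ha k)]

end PairDir

def signedT {d : ℕ} (I : Set (Fin d)) (Z : Set (Fin d → ℝ)) (a : Fin d → ℝ) (h : ℝ → EReal) :
    Set (ℝ × (Fin d → ℝ) × (Fin d → ℝ)) :=
  {p | (∀ i ∈ I, 0 ≤ p.2.1 i) ∧ p.2.2 ∈ Z ∧ h (∑ i, a i * p.2.1 i) ≤ (p.1 : EReal) ∧
    ∀ i, p.2.1 i * (1 - p.2.2 i) = 0}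

theorem smul_pairDir_mem_signedT {d : ℕ} {I : Set (Fin d)} {Z : Set (Fin d → ℝ)}
    {a : Fin d → ℝ} {h : ℝ → EReal} (ha : ∀ k, a k ≠ 0) (h0 : h 0 = 0) {i j : Fin d}
    {z : Fin d → ℝ} (hz : z ∈ Z) (hzi : z i = 1) (hzj : z j = 1) {x : Fin d → ℝ}
    (hxI : ∀ k ∈ I, 0 ≤ x k) {μ : ℝ} (hμ : 0 ≤ μ)
    (hμx : μ ≠ 0 → 0 < a i * x i ∧ a j * x j < 0) :
    ((0 : ℝ), μ • pairDir a i j, z) ∈ signedT I Z a h := by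
  refine ⟨fun k hk => ?_, hz, ?_, fun k => ?_⟩
  · rcases eq_or_ne μ 0 with rfl | hμ0
    · simp
    · exact mul_nonneg hμ (pairDir_nonneg i j (hμx hμ0).1 (hμx hμ0).2 (hxI k hk))
  · simp [mul_left_comm _ μ, ← mul_sum, sum_mul_pairDir i j ha, h0]
  · by_cases hki : k = i
    · simp [hki, hzi]
    by_cases hkj : k = j
    · simp [hkj, hzj]
    · simp [pairDir_apply_of_ne i j hki hkj]

theorem clconv_T_recession_signed_general {d : ℕ} (I : Set (Fin d))
    (Z : Set (Fin d → ℝ))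
    (hZpair : ∀ i j : Fin d, ∃ z ∈ Z, z i = 1 ∧ z j = 1)
    (a : Fin d → ℝ) (ha : ∀ i, a i ≠ 0)
    (h : ℝ → EReal)
    (h0 : h 0 = 0) :
    ∀ p ∈ closure (convexHull ℝ
      {p : ℝ × (Fin d → ℝ) × (Fin d → ℝ) |
        (∀ i ∈ I, 0 ≤ p.2.1 i) ∧ p.2.2 ∈ Z ∧
        h (∑ i, a i * p.2.1 i) ≤ (p.1 : EReal) ∧
        ∀ i, p.2.1 i * (1 - p.2.2 i) = 0}),
    ∀ xbar : Fin d → ℝ, (∀ i ∈ I, 0 ≤ xbar i) → (∑ i, a i * xbar i) = 0 →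
      (p.1, p.2.1 + xbar, p.2.2) ∈ closure (convexHull ℝ
        {p : ℝ × (Fin d → ℝ) × (Fin d → ℝ) |
          (∀ i ∈ I, 0 ≤ p.2.1 i) ∧ p.2.2 ∈ Z ∧
          h (∑ i, a i * p.2.1 i) ≤ (p.1 : EReal) ∧
          ∀ i, p.2.1 i * (1 - p.2.2 i) = 0}) := by
  change ∀ p ∈ closure (convexHull ℝ (signedT I Z a h)), ∀ x : Fin d → ℝ, _ → _ →
    (p.1, p.2.1 + x, p.2.2) ∈ closure (convexHull ℝ (signedT I Z a h))
  intro p hp x hxI hax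
  set K := closure (convexHull ℝ (signedT I Z a h))
  obtain ⟨c, hc0, hc_sign, hcsum⟩ := exists_sum_smul_single_sub_single_eq (fun k => a k * x k) hax
  choose z hzZ hzi hzj using hZpair
  have hdir : ∀ i j, ((0 : ℝ), c i j • pairDir a i j, (0 : Fin d → ℝ)) ∈ recessionCone K :=
    fun i j => mem_recessionCone_closure_convexHull_of_ray (y := (0, 0, z i j)) fun t ht => by
      simpa [smul_smul] using smul_pairDir_mem_signedT ha h0 (hzZ i j) (hzi i j) (hzj i j) hxI
        (mul_nonneg ht.le (hc0 i j)) fun hne => hc_sign i j (right_ne_zero_of_mul hne)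
  have hx : ((0 : ℝ), x, (0 : Fin d → ℝ)) =
      ∑ i, ∑ j, ((0 : ℝ), c i j • pairDir a i j, (0 : Fin d → ℝ)) := by
    simp [Prod.ext_iff, Prod.fst_sum, Prod.snd_sum, sum_sum_smul_pairDir ha hcsum]
  have hxK : ((0 : ℝ), x, (0 : Fin d → ℝ)) ∈ recessionCone K := by
    rw [hx]
    exact sum_mem fun i _ => sum_mem fun j _ => hdir i j
  convert hxK p hp using 1
  simp [Prod.ext_iff]

/-- Recessive directions of `cl conv(T)` in the sign-constrained case: adding any
`x̄ ∈ X` with `aᵀx̄ = 0` stays in `cl conv(T)`. -/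
theorem clconv_T_recession_signed {d : ℕ} (I : Set (Fin d))
    (Z : Set (Fin d → ℝ)) (hZ01 : ∀ z ∈ Z, ∀ i, z i = 0 ∨ z i = 1)
    (hZpair : ∀ i j : Fin d, ∃ z ∈ Z, z i = 1 ∧ z j = 1)
    (a : Fin d → ℝ) (ha : ∀ i, a i ≠ 0)
    (h : ℝ → EReal)
    (hbot : ∀ x : ℝ, h x ≠ ⊥) (hnetop : ∃ x : ℝ, h x ≠ ⊤)
    (hlsc : LowerSemicontinuous h)
    (hconv : Convex ℝ {u : ℝ × ℝ | h u.2 ≤ (u.1 : EReal)})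
    (h0 : h 0 = 0)
    -- `h` is nonlinear: its epigraph contains no line
    (hnl : ¬ ∃ (u v : ℝ × ℝ), v ≠ 0 ∧
      ∀ t : ℝ, u + t • v ∈ {q : ℝ × ℝ | h q.2 ≤ (q.1 : EReal)}) :
    ∀ p ∈ closure (convexHull ℝ
      {p : ℝ × (Fin d → ℝ) × (Fin d → ℝ) |
        (∀ i ∈ I, 0 ≤ p.2.1 i) ∧ p.2.2 ∈ Z ∧
        h (∑ i, a i * p.2.1 i) ≤ (p.1 : EReal) ∧
        ∀ i, p.2.1 i * (1 - p.2.2 i) = 0}),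
    ∀ xbar : Fin d → ℝ, (∀ i ∈ I, 0 ≤ xbar i) → (∑ i, a i * xbar i) = 0 →
      (p.1, p.2.1 + xbar, p.2.2) ∈ closure (convexHull ℝ
        {p : ℝ × (Fin d → ℝ) × (Fin d → ℝ) |
          (∀ i ∈ I, 0 ≤ p.2.1 i) ∧ p.2.2 ∈ Z ∧
          h (∑ i, a i * p.2.1 i) ≤ (p.1 : EReal) ∧
          ∀ i, p.2.1 i * (1 - p.2.2 i) = 0}) :=
  clconv_T_recession_signed_general I Z hZpair a ha h h0
end

section
/- Let Z = {z ∈ {0,1}^d : Σ_{i∈[d]} z_i ≤ κ} for some κ ∈ {2, …, d}, and let Ω = {(w, z) ∈ {0,1}^d × Z : Σ_{i∈[d]} w_i ≤ 1 and w_i ≤ z_i for all i ∈ [d]}. Then conv(Ω) = {(w, z) ∈ [0,1]^d × [0,1]^d : Σ_{i∈[d]} w_i ≤ 1, w_i ≤ z_i for all i ∈ [d], and Σ_{i∈[d]} z_i ≤ κ}. -/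
/-!
The polytope `P` on the right-hand side is compact and convex, so by Krein–Milman it is the
closure of the convex hull of its extreme points. Hence it suffices to show that every extreme
point of `P` is integral, i.e. lies in the finite set `Ω`, whose convex hull is closed.

A point `(w, z) ∈ P` with a fractional coordinate is the midpoint of two points of `P` as soon as
there is a nonzero direction `(u, v)` that keeps every tight constraint tight: `u i = 0` where
`w i ∈ {0, 1}`, `v i = 0` where `z i ∈ {0, 1}`, `u i = v i` where `w i = z i`, and `∑ u = 0`,
resp. `∑ v = 0`, when `∑ w = 1`, resp. `∑ z = κ`. Such a direction, supported on at most three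
coordinates, is found by a case analysis; the key fact is that a sum of numbers in `[0, 1]` equal
to an integer cannot have exactly one fractional summand.
-/

open Filter Topology Set

def omegaSet (ι : Type*) [Fintype ι] (κ : ℕ) : Set ((ι → ℝ) × (ι → ℝ)) :=
  {q | (∀ i, q.1 i = 0 ∨ q.1 i = 1) ∧ ((∀ i, q.2 i = 0 ∨ q.2 i = 1) ∧ ∑ i, q.2 i ≤ κ) ∧
    ∑ i, q.1 i ≤ 1 ∧ ∀ i, q.1 i ≤ q.2 i}

def omegaPolytope (ι : Type*) [Fintype ι] (κ : ℕ) : Set ((ι → ℝ) × (ι → ℝ)) :=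
  {q | (∀ i, q.1 i ∈ Icc (0 : ℝ) 1) ∧ (∀ i, q.2 i ∈ Icc (0 : ℝ) 1) ∧ ∑ i, q.1 i ≤ 1 ∧
    (∀ i, q.1 i ≤ q.2 i) ∧ ∑ i, q.2 i ≤ κ}

lemma eq_zero_of_add_mem_of_sub_mem_of_mem_extremePoints {E : Type*} [AddCommGroup E]
    [Module ℝ E] {A : Set E} {x v : E} (hx : x ∈ A.extremePoints ℝ) (hadd : x + v ∈ A)
    (hsub : x - v ∈ A) : v = 0 := by
  have hseg : x ∈ openSegment ℝ (x - v) (x + v) :=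
    ⟨1 / 2, 1 / 2, by norm_num, by norm_num, by norm_num, by module⟩
  simpa using hx.2 hsub hadd hseg

lemma eventually_add_mul_le_add_mul {a b c e : ℝ} (h : a ≤ c) (heq : a = c → b = e) :
    ∀ᶠ t in 𝓝 (0 : ℝ), a + t * b ≤ c + t * e := by
  rcases h.lt_or_eq with hlt | rfl
  · exact (ContinuousAt.eventually_lt (by fun_prop) (by fun_prop) (by simpa using hlt)).mono
      fun _ ht => ht.le
  · simp [heq rfl]

lemma eq_zero_or_eq_one_of_mem_Icc_of_notMem_Ioo {x : ℝ} (hx : x ∈ Icc 0 1) (h : x ∉ Ioo 0 1) :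
    x = 0 ∨ x = 1 := by
  have : x ∈ Icc 0 1 \ Ioo 0 1 := ⟨hx, h⟩
  rwa [Icc_sdiff_Ioo_same zero_le_one] at this

lemma exists_ne_mem_Ioo_of_sum_eq_natCast {ι : Type*} [Fintype ι] [DecidableEq ι] {f : ι → ℝ}
    (hf : ∀ t, f t ∈ Icc 0 1) {n : ℕ} (hsum : ∑ t, f t = n) {i : ι} (hi : f i ∈ Ioo 0 1) :
    ∃ j ≠ i, f j ∈ Ioo 0 1 := by
  by_contra! h
  have hnat (t : ι) : ∃ k : ℕ, t ≠ i → f t = k := by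
    by_cases hti : t = i
    · exact ⟨0, fun h => (h hti).elim⟩
    rcases eq_zero_or_eq_one_of_mem_Icc_of_notMem_Ioo (hf t) (h t hti) with h0 | h1
    · exact ⟨0, fun _ => by simpa using h0⟩
    · exact ⟨1, fun _ => by simpa using h1⟩
  choose k hk using hnat
  have hfi : f i = n - ∑ t ∈ Finset.univ.erase i, k t := by
    rw [← hsum, ← Finset.add_sum_erase _ _ (Finset.mem_univ i), Nat.cast_sum,
      Finset.sum_congr rfl fun t ht => hk t (Finset.ne_of_mem_erase ht)]
    ring
  obtain ⟨h0, h1⟩ := hi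
  rw [hfi] at h0 h1
  have : ∑ t ∈ Finset.univ.erase i, k t < n := by exact_mod_cast sub_pos.1 h0
  have : n < ∑ t ∈ Finset.univ.erase i, k t + 1 := by exact_mod_cast sub_lt_iff_lt_add'.1 h1
  omega

section Polytope

variable {ι : Type*} [Fintype ι] {κ : ℕ}

lemma omegaSet_subset_omegaPolytope : omegaSet ι κ ⊆ omegaPolytope ι κ := by
  have h01 {x : ℝ} (hx : x = 0 ∨ x = 1) : x ∈ Icc 0 1 := by rcases hx with rfl | rfl <;> simp
  exact fun q ⟨hw, ⟨hz, hT⟩, hS, hwz⟩ => ⟨fun i => h01 (hw i), fun i => h01 (hz i), hS, hwz, hT⟩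

lemma finite_omegaSet : (omegaSet ι κ).Finite := by
  have h01 : (univ.pi fun _ : ι => ({0, 1} : Set ℝ)).Finite := Set.Finite.pi fun _ => by simp
  exact (h01.prod h01).subset fun q hq => ⟨fun i _ => hq.1 i, fun i _ => hq.2.1.1 i⟩

lemma convex_omegaPolytope : Convex ℝ (omegaPolytope ι κ) := by
  rintro ⟨w, z⟩ ⟨hw, hz, hS, hwz, hT⟩ ⟨w', z'⟩ ⟨hw', hz', hS', hwz', hT'⟩ a b ha hb hab
  refine ⟨fun i => convex_Icc 0 1 (hw i) (hw' i) ha hb hab,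
    fun i => convex_Icc 0 1 (hz i) (hz' i) ha hb hab, ?_, fun i => ?_, ?_⟩
  all_goals simp only [Prod.fst_add, Prod.snd_add, Prod.smul_fst, Prod.smul_snd, Pi.add_apply,
    Pi.smul_apply, smul_eq_mul, Finset.sum_add_distrib, ← Finset.mul_sum]
  · exact convex_Iic (1 : ℝ) hS hS' ha hb hab
  · exact add_le_add (mul_le_mul_of_nonneg_left (hwz i) ha) (mul_le_mul_of_nonneg_left (hwz' i) hb)
  · exact convex_Iic (κ : ℝ) hT hT' ha hb hab

lemma isCompact_omegaPolytope : IsCompact (omegaPolytope ι κ) := by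
  refine ((isCompact_Icc (a := (0 : ι → ℝ)) (b := 1)).prod isCompact_Icc).of_isClosed_subset ?_
    fun q hq => ⟨⟨fun i => (hq.1 i).1, fun i => (hq.1 i).2⟩,
      ⟨fun i => (hq.2.1 i).1, fun i => (hq.2.1 i).2⟩⟩
  simp only [omegaPolytope, mem_Icc, ofPred_and, ofPred_forall]
  refine .inter (isClosed_iInter fun i => .inter ?_ ?_)
    (.inter (isClosed_iInter fun i => .inter ?_ ?_)
      (.inter ?_ (.inter (isClosed_iInter fun i => ?_) ?_))) <;>
  exact isClosed_le (by fun_prop) (by fun_prop)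

end Polytope

/-- The constraints among `0 ≤ x`, `x ≤ 1`, `0 ≤ y`, `y ≤ 1`, `x ≤ y` that are tight at `(x, y)`
stay tight along the direction `(a, b)`. -/
def AdmissibleMove (x y a b : ℝ) : Prop :=
  ((x = 0 ∨ x = 1) → a = 0) ∧ ((y = 0 ∨ y = 1) → b = 0) ∧ (x = y → a = b)

namespace AdmissibleMove

variable {x y a b a' b' : ℝ}

lemma zero : AdmissibleMove x y 0 0 := ⟨fun _ => rfl, fun _ => rfl, fun _ => rfl⟩

lemma add (h : AdmissibleMove x y a b) (h' : AdmissibleMove x y a' b') :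
    AdmissibleMove x y (a + a') (b + b') :=
  ⟨fun hx => by rw [h.1 hx, h'.1 hx, add_zero], fun hy => by rw [h.2.1 hy, h'.2.1 hy, add_zero],
    fun hxy => by rw [h.2.2 hxy, h'.2.2 hxy]⟩

lemma mul (h : AdmissibleMove x y a b) (c : ℝ) : AdmissibleMove x y (c * a) (c * b) :=
  ⟨fun hx => by rw [h.1 hx, mul_zero], fun hy => by rw [h.2.1 hy, mul_zero],
    fun hxy => by rw [h.2.2 hxy]⟩

lemma neg (h : AdmissibleMove x y a b) : AdmissibleMove x y (-a) (-b) := by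
  simpa using h.mul (-1)

lemma one_ite (hx : x ∈ Ioo 0 1) (hxy : x ≤ y) (hy : y ≤ 1) :
    AdmissibleMove x y 1 (if x = y then 1 else 0) := by
  refine ⟨fun h => ?_, fun h => ?_, fun h => by simp [h]⟩
  · rcases h with rfl | rfl <;> simp at hx
  · split_ifs with hxy'
    · subst hxy'; rcases h with rfl | rfl <;> simp at hx
    · rfl

lemma ite_one (hy : y ∈ Ioo 0 1) (hx : 0 ≤ x) (hxy : x ≤ y) :
    AdmissibleMove x y (if x = y then 1 else 0) 1 := by
  refine ⟨fun h => ?_, fun h => ?_, fun h => by simp [h]⟩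
  · split_ifs with hxy'
    · subst hxy'; rcases h with rfl | rfl <;> simp at hy
    · rfl
  · rcases h with rfl | rfl <;> simp at hy

lemma pi_single {ι : Type*} [DecidableEq ι] {w z : ι → ℝ} {i : ι}
    (h : AdmissibleMove (w i) (z i) a b) (t : ι) :
    AdmissibleMove (w t) (z t) ((Pi.single i a : ι → ℝ) t) ((Pi.single i b : ι → ℝ) t) := by
  by_cases ht : t = i
  · subst ht; simpa using h
  · simpa [ht] using zero

end AdmissibleMove

section FeasibleDirection

variable {ι : Type*} [Fintype ι] {κ : ℕ} {w z u v : ι → ℝ}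

structure IsFeasibleDir (κ : ℕ) (w z u v : ι → ℝ) : Prop where
  admissible : ∀ i, AdmissibleMove (w i) (z i) (u i) (v i)
  sum_fst : ∑ i, w i = 1 → ∑ i, u i = 0
  sum_snd : ∑ i, z i = κ → ∑ i, v i = 0

lemma IsFeasibleDir.eventually_mem_omegaPolytope (hx : (w, z) ∈ omegaPolytope ι κ)
    (h : IsFeasibleDir κ w z u v) :
    ∀ᶠ t in 𝓝 (0 : ℝ), (w, z) + t • (u, v) ∈ omegaPolytope ι κ := by
  obtain ⟨hw, hz, hS, hwz, hT⟩ := hx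
  have hIcc {x a : ℝ} (hx : x ∈ Icc 0 1) (ha : (x = 0 ∨ x = 1) → a = 0) :
      ∀ᶠ t in 𝓝 (0 : ℝ), x + t * a ∈ Icc 0 1 := by
    have h0 := eventually_add_mul_le_add_mul (b := 0) hx.1 fun h => (ha (.inl h.symm)).symm
    have h1 := eventually_add_mul_le_add_mul (e := 0) hx.2 fun h => ha (.inr h)
    filter_upwards [h0, h1] with t h0 h1
    exact ⟨by simpa using h0, by simpa using h1⟩
  have hfst := eventually_all.2 fun i => hIcc (hw i) (h.admissible i).1
  have hsnd := eventually_all.2 fun i => hIcc (hz i) (h.admissible i).2.1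
  have hle := eventually_all.2 fun i => eventually_add_mul_le_add_mul (hwz i) (h.admissible i).2.2
  have hsumw := eventually_add_mul_le_add_mul (e := 0) hS h.sum_fst
  have hsumz := eventually_add_mul_le_add_mul (e := 0) hT h.sum_snd
  filter_upwards [hfst, hsnd, hle, hsumw, hsumz] with t hfst hsnd hle hsumw hsumz
  simp only [Prod.mk_add_mk, Prod.smul_mk, omegaPolytope, mem_ofPred_eq, Pi.add_apply,
    Pi.smul_apply, smul_eq_mul, Finset.sum_add_distrib, ← Finset.mul_sum]
  exact ⟨hfst, hsnd, by simpa using hsumw, hle, by simpa using hsumz⟩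

lemma IsFeasibleDir.eq_zero (hx : (w, z) ∈ (omegaPolytope ι κ).extremePoints ℝ)
    (h : IsFeasibleDir κ w z u v) : u = 0 ∧ v = 0 := by
  have hpm := (h.eventually_mem_omegaPolytope hx.1).and
    ((continuous_neg.tendsto' (0 : ℝ) 0 neg_zero).eventually (h.eventually_mem_omegaPolytope hx.1))
  obtain ⟨t, ⟨hadd, hsub⟩, ht⟩ :=
    ((hpm.filter_mono nhdsWithin_le_nhds).and self_mem_nhdsWithin).exists (f := 𝓝[≠] (0 : ℝ))
  have := eq_zero_of_add_mem_of_sub_mem_of_mem_extremePoints hx hadd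
    (by simpa [sub_eq_add_neg] using hsub)
  simpa [show t ≠ 0 from ht] using this

end FeasibleDirection

section ExtremePoints

variable {ι : Type*} [Fintype ι] [DecidableEq ι] {κ : ℕ} {w z : ι → ℝ} {i j : ι}

lemma notMem_extremePoints_of_fst_single (hx : (w, z) ∈ omegaPolytope ι κ)
    (hi : w i ∈ Ioo 0 1) (hS : ∑ t, w t < 1) (h : w i ≠ z i ∨ ∑ t, z t < κ) :
    (w, z) ∉ (omegaPolytope ι κ).extremePoints ℝ := fun hext => by
  obtain ⟨-, hz, -, hwz, -⟩ := hx
  have hu := IsFeasibleDir.eq_zero hext (u := Pi.single i 1)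
    ⟨AdmissibleMove.pi_single (.one_ite hi (hwz i) (hz i).2), fun hS' => (hS.ne hS').elim,
      fun hT => by simp [h.resolve_right hT.not_lt]⟩
  simpa using congrFun hu.1 i

lemma notMem_extremePoints_of_snd_single (hx : (w, z) ∈ omegaPolytope ι κ)
    (hi : z i ∈ Ioo 0 1) (hT : ∑ t, z t < κ) (h : w i ≠ z i ∨ ∑ t, w t < 1) :
    (w, z) ∉ (omegaPolytope ι κ).extremePoints ℝ := fun hext => by
  obtain ⟨hw, -, -, hwz, -⟩ := hx
  have hv := IsFeasibleDir.eq_zero hext (v := Pi.single i 1)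
    ⟨AdmissibleMove.pi_single (.ite_one hi (hw i).1 (hwz i)),
      fun hS => by simp [h.resolve_right hS.not_lt], fun hT' => (hT.ne hT').elim⟩
  simpa using congrFun hv.2 i

lemma notMem_extremePoints_of_fst_pair (hx : (w, z) ∈ omegaPolytope ι κ) (hij : i ≠ j)
    (hi : w i ∈ Ioo 0 1) (hj : w j ∈ Ioo 0 1) (h : (w i = z i ↔ w j = z j) ∨ ∑ t, z t < κ) :
    (w, z) ∉ (omegaPolytope ι κ).extremePoints ℝ := fun hext => by
  obtain ⟨-, hz, -, hwz, -⟩ := hx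
  have hu := IsFeasibleDir.eq_zero hext (u := Pi.single i 1 + Pi.single j (-1))
    ⟨fun t => (AdmissibleMove.pi_single (.one_ite hi (hwz i) (hz i).2) t).add
      (AdmissibleMove.pi_single (AdmissibleMove.one_ite hj (hwz j) (hz j).2).neg t),
      fun _ => by simp [Finset.sum_add_distrib],
      fun hT => by simp [Finset.sum_add_distrib, h.resolve_right hT.not_lt]⟩
  simpa [hij] using congrFun hu.1 i

lemma notMem_extremePoints_of_snd_pair (hx : (w, z) ∈ omegaPolytope ι κ) (hij : i ≠ j)
    (hi : z i ∈ Ioo 0 1) (hj : z j ∈ Ioo 0 1) (h : (w i = z i ↔ w j = z j) ∨ ∑ t, w t < 1) :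
    (w, z) ∉ (omegaPolytope ι κ).extremePoints ℝ := fun hext => by
  obtain ⟨hw, -, -, hwz, -⟩ := hx
  have hv := IsFeasibleDir.eq_zero hext (v := Pi.single i 1 + Pi.single j (-1))
    ⟨fun t => (AdmissibleMove.pi_single (.ite_one hi (hw i).1 (hwz i)) t).add
      (AdmissibleMove.pi_single (AdmissibleMove.ite_one hj (hw j).1 (hwz j)).neg t),
      fun hS => by simp [Finset.sum_add_distrib, h.resolve_right hS.not_lt],
      fun _ => by simp [Finset.sum_add_distrib]⟩
  simpa [hij] using congrFun hv.2 i

/-- Both sums tight, `w i = z i` and `w j < z j` fractional: raise `(w i, z i)`, lower `z k` for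
a second fractional `z k`, and lower `w k` or `w j` according to whether `w k = z k`. -/
lemma notMem_extremePoints_of_eq_of_ne (hx : (w, z) ∈ omegaPolytope ι κ)
    (hi : w i ∈ Ioo 0 1) (hiz : w i = z i) (hj : w j ∈ Ioo 0 1) (hjz : w j ≠ z j)
    (hT : ∑ t, z t = κ) : (w, z) ∉ (omegaPolytope ι κ).extremePoints ℝ := fun hext => by
  obtain ⟨hw, hz, -, hwz, -⟩ := hx
  obtain ⟨k, hki, hk⟩ := exists_ne_mem_Ioo_of_sum_eq_natCast hz hT (hiz ▸ hi)
  have hij : i ≠ j := by rintro rfl; exact hjz hiz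
  set c : ℝ := if w k = z k then 1 else 0
  have hmi := AdmissibleMove.one_ite hi (hwz i) (hz i).2
  have hmj : AdmissibleMove (w j) (z j) (c - 1) 0 := by
    simpa [hjz] using (AdmissibleMove.one_ite hj (hwz j) (hz j).2).mul (c - 1)
  have hmk := (AdmissibleMove.ite_one hk (hw k).1 (hwz k)).neg
  have hu := IsFeasibleDir.eq_zero hext
    (u := Pi.single i 1 + Pi.single j (c - 1) + Pi.single k (-c))
    (v := Pi.single i (if w i = z i then 1 else 0) + Pi.single j 0 + Pi.single k (-1))
    ⟨fun t => ((AdmissibleMove.pi_single hmi t).add (AdmissibleMove.pi_single hmj t)).add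
      (AdmissibleMove.pi_single hmk t),
      fun _ => by simp [Finset.sum_add_distrib],
      fun _ => by simp [Finset.sum_add_distrib, hiz]⟩
  simpa [hij, hki.symm] using congrFun hu.1 i

lemma notMem_extremePoints_of_fst_mem_Ioo (hx : (w, z) ∈ omegaPolytope ι κ)
    (hi : w i ∈ Ioo 0 1) : (w, z) ∉ (omegaPolytope ι κ).extremePoints ℝ := by
  obtain ⟨hw, hz, hS, -, hT⟩ := id hx
  rcases hS.lt_or_eq with hS | hS
  · by_cases h : w i ≠ z i ∨ ∑ t, z t < κ
    · exact notMem_extremePoints_of_fst_single hx hi hS h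
    push Not at h
    obtain ⟨j, hji, hj⟩ := exists_ne_mem_Ioo_of_sum_eq_natCast hz (hT.antisymm h.2) (h.1 ▸ hi)
    exact notMem_extremePoints_of_snd_pair hx hji.symm (h.1 ▸ hi) hj (.inr hS)
  · obtain ⟨j, hji, hj⟩ := exists_ne_mem_Ioo_of_sum_eq_natCast hw (n := 1) (by simpa using hS) hi
    by_cases h : (w i = z i ↔ w j = z j) ∨ ∑ t, z t < κ
    · exact notMem_extremePoints_of_fst_pair hx hji.symm hi hj h
    push Not at h
    rcases h with ⟨h | h, hT'⟩
    · exact notMem_extremePoints_of_eq_of_ne hx hi h.1 hj h.2 (hT.antisymm hT')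
    · exact notMem_extremePoints_of_eq_of_ne hx hj h.2 hi h.1 (hT.antisymm hT')

lemma notMem_extremePoints_of_snd_mem_Ioo (hx : (w, z) ∈ omegaPolytope ι κ)
    (hi : z i ∈ Ioo 0 1) (hw : ∀ t, w t ∉ Ioo 0 1) :
    (w, z) ∉ (omegaPolytope ι κ).extremePoints ℝ := by
  have hne {t} (ht : z t ∈ Ioo 0 1) : w t ≠ z t := fun h => hw t (h ▸ ht)
  rcases hx.2.2.2.2.lt_or_eq with hT | hT
  · exact notMem_extremePoints_of_snd_single hx hi hT (.inl (hne hi))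
  · obtain ⟨j, hji, hj⟩ := exists_ne_mem_Ioo_of_sum_eq_natCast hx.2.1 hT hi
    exact notMem_extremePoints_of_snd_pair hx hji.symm hi hj (.inl (by simp [hne hi, hne hj]))

end ExtremePoints

lemma extremePoints_omegaPolytope_subset {ι : Type*} [Fintype ι] {κ : ℕ} :
    (omegaPolytope ι κ).extremePoints ℝ ⊆ omegaSet ι κ := by
  classical
  rintro ⟨w, z⟩ hext
  obtain ⟨hw, hz, hS, hwz, hT⟩ := hext.1
  have hwint (i) : w i ∉ Ioo 0 1 := fun hi => notMem_extremePoints_of_fst_mem_Ioo hext.1 hi hext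
  have hzint (i) : z i ∉ Ioo 0 1 := fun hi =>
    notMem_extremePoints_of_snd_mem_Ioo hext.1 hi hwint hext
  exact ⟨fun i => eq_zero_or_eq_one_of_mem_Icc_of_notMem_Ioo (hw i) (hwint i),
    ⟨fun i => eq_zero_or_eq_one_of_mem_Icc_of_notMem_Ioo (hz i) (hzint i), hT⟩, hS, hwz⟩

theorem convexHull_Omega_cardinality_general {d : ℕ} (κ : ℕ) :
    convexHull ℝ {q : (Fin d → ℝ) × (Fin d → ℝ) |
        (∀ i, q.1 i = 0 ∨ q.1 i = 1) ∧
        ((∀ i, q.2 i = 0 ∨ q.2 i = 1) ∧ (∑ i, q.2 i) ≤ (κ : ℝ)) ∧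
        (∑ i, q.1 i) ≤ 1 ∧ (∀ i, q.1 i ≤ q.2 i)}
      = {q : (Fin d → ℝ) × (Fin d → ℝ) |
        (∀ i, q.1 i ∈ Set.Icc (0 : ℝ) 1) ∧ (∀ i, q.2 i ∈ Set.Icc (0 : ℝ) 1) ∧
        (∑ i, q.1 i) ≤ 1 ∧ (∀ i, q.1 i ≤ q.2 i) ∧ (∑ i, q.2 i) ≤ (κ : ℝ)} := by
  change convexHull ℝ (omegaSet (Fin d) κ) = omegaPolytope (Fin d) κ
  refine (convexHull_min omegaSet_subset_omegaPolytope convex_omegaPolytope).antisymm ?_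
  calc omegaPolytope (Fin d) κ
      = closure (convexHull ℝ ((omegaPolytope (Fin d) κ).extremePoints ℝ)) :=
        (closure_convexHull_extremePoints isCompact_omegaPolytope convex_omegaPolytope).symm
    _ ⊆ closure (convexHull ℝ (omegaSet (Fin d) κ)) :=
        closure_mono (convexHull_mono extremePoints_omegaPolytope_subset)
    _ = convexHull ℝ (omegaSet (Fin d) κ) :=
        (finite_omegaSet.isClosed_convexHull (𝕜 := ℝ)).closure_eq

/-- Convex hull of `Ω` for the cardinality constraint set
`Z = {z ∈ {0,1}^d : 1ᵀz ≤ κ}` with `κ ∈ {2, …, d}`. -/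
theorem convexHull_Omega_cardinality {d : ℕ} (κ : ℕ) (hκ2 : 2 ≤ κ) (hκd : κ ≤ d) :
    convexHull ℝ {q : (Fin d → ℝ) × (Fin d → ℝ) |
        (∀ i, q.1 i = 0 ∨ q.1 i = 1) ∧
        ((∀ i, q.2 i = 0 ∨ q.2 i = 1) ∧ (∑ i, q.2 i) ≤ (κ : ℝ)) ∧
        (∑ i, q.1 i) ≤ 1 ∧ (∀ i, q.1 i ≤ q.2 i)}
      = {q : (Fin d → ℝ) × (Fin d → ℝ) |
        (∀ i, q.1 i ∈ Set.Icc (0 : ℝ) 1) ∧ (∀ i, q.2 i ∈ Set.Icc (0 : ℝ) 1) ∧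
        (∑ i, q.1 i) ≤ 1 ∧ (∀ i, q.1 i ≤ q.2 i) ∧ (∑ i, q.2 i) ≤ (κ : ℝ)} :=
  convexHull_Omega_cardinality_general κ
end
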